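/- In the Jane–Julie model M₂: ButFor(M₂, (B = 0)) = {J₂, B} and HP(M₂, (B = 0)) = {J₂, B}; in particular J₁ ∉ HP(M₂, (B = 0)). -/

import Mathlib

namespace HPFramework

open Classical

/-- A causal model in the Halpern–Pearl framework, over exogenous variables `U`,
endogenous variables `V` and value domain `D`.  It packages the causal structure
(the finite ranges of the variables), the DAG (the well-founded `parent` relation),
the structural equations `F` (each depending only on the exogenous variables and the
parents, and taking values in the range), and the context `ctx`. -/
structure CausalModel (U V D : Type) [Fintype U] [Fintype V] where
  rangeU : U → Finset D
  range : V → Finset D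
  rangeU_nonempty : ∀ W, (rangeU W).Nonempty
  range_nonempty : ∀ X, (range X).Nonempty
  parent : V → V → Prop
  acyclic : WellFounded parent
  F : V → (U → D) → (V → D) → D
  F_parents : ∀ X u (a b : V → D), (∀ Y, parent Y X → a Y = b Y) → F X u a = F X u b
  F_range : ∀ X u v, (∀ W, u W ∈ rangeU W) → (∀ Y, v Y ∈ range Y) → F X u v ∈ range X
  ctx : U → D
  ctx_range : ∀ W, ctx W ∈ rangeU W

variable {U V D : Type} [Fintype U] [Fintype V]

/-- The unique solution `S_M` of the system of structural equations of `M`. -/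
noncomputable def sol (M : CausalModel U V D) : V → D :=
  WellFounded.fix M.acyclic fun X ih =>
    M.F X M.ctx fun Y => if h : M.parent Y X then ih Y h else (M.range_nonempty Y).choose

/-- A partial, range-permitted assignment of values to the endogenous variables of `M`. -/
def PAssign (M : CausalModel U V D) : Type :=
  {g : V → Option D // ∀ X d, g X = some d → d ∈ M.range X}

/-- The intervened model `M_[X⃗ ← x⃗]`: the equation of each variable assigned a value
by `g` is replaced by the corresponding constant; other equations are unchanged. -/
noncomputable def intervene (M : CausalModel U V D) (g : PAssign M) : CausalModel U V D where
  rangeU := M.rangeU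
  range := M.range
  rangeU_nonempty := M.rangeU_nonempty
  range_nonempty := M.range_nonempty
  parent := M.parent
  acyclic := M.acyclic
  F := fun X u v => (g.1 X).getD (M.F X u v)
  F_parents := by
    intro X u a b hab
    cases h : g.1 X with
    | none => simp only [h, Option.getD_none]; exact M.F_parents X u a b hab
    | some d => simp [h]
  F_range := by
    intro X u v hu hv
    cases h : g.1 X with
    | none => simpa [h] using M.F_range X u v hu hv
    | some d => simpa [h] using g.2 X d h
  ctx := M.ctx
  ctx_range := M.ctx_range

/-- Basic formulas: Boolean combinations of atoms `(X = x)` with `X` endogenous. -/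
inductive BForm (V D : Type) : Type where
  | atom : V → D → BForm V D
  | not : BForm V D → BForm V D
  | and : BForm V D → BForm V D → BForm V D

/-- Evaluation of a basic formula at an assignment of values to the endogenous variables. -/
def BForm.eval (s : V → D) : BForm V D → Prop
  | .atom X x => s X = x
  | .not φ => ¬ φ.eval s
  | .and φ ψ => φ.eval s ∧ ψ.eval s

/-- `M ⊨ φ` for a basic formula `φ`, evaluated via the solution `S_M`. -/
def Sat (M : CausalModel U V D) (φ : BForm V D) : Prop := (BForm.eval (sol M)) φ

variable [DecidableEq V]

/-- The single intervention `[X ← x]` (with `x` in the range of `X`). -/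
noncomputable def single (M : CausalModel U V D) (X : V) (x : D)
    (hx : x ∈ M.range X) : PAssign M :=
  ⟨fun Y => if Y = X then some x else none, by
    intro Y d h
    simp only at h
    split at h
    next heq => cases h; exact heq ▸ hx
    next => cases h⟩

/-- The but-for theory: `X ∈ ButFor(M,φ)` iff `M ⊨ φ` and there is `x ∈ R(X)` with
`M ⊨ [X ← x] ¬φ`. -/
noncomputable def ButFor (M : CausalModel U V D) (φ : BForm V D) : Set V :=
  {X | Sat M φ ∧ ∃ x, ∃ hx : x ∈ M.range X, ¬ Sat (intervene M (single M X x hx)) φ}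

/-- `ℳ(A)` (relative to `M`): all models obtained from `M` by a (possibly partial)
range-permitted assignment to the variables in `A`, while any assigned variable outside
`A` is held fixed at its actual value in `M`. -/
def MSet (M : CausalModel U V D) (A : Set V) : Set (CausalModel U V D) :=
  {M' | ∃ g : PAssign M,
    (∀ X, X ∉ A → ∀ d, g.1 X = some d → d = sol M X) ∧ M' = intervene M g}

/-- A causal theory: a map assigning to every model and basic formula a set of
endogenous variables (the causes). -/
def CausalTheory (U V D : Type) [Fintype U] [Fintype V] : Type _ :=
  CausalModel U V D → BForm V D → Set V

/-- `X` is a putative cause of `φ` in `M` (w.r.t. the theory `C`). -/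
noncomputable def Putative (C : CausalTheory U V D) (M : CausalModel U V D)
    (φ : BForm V D) (X : V) : Prop :=
  ∃ M' ∈ MSet M (C M φ), sol M X = sol M' X ∧ X ∈ ButFor M' φ

/-- `X` is a preempted cause of `φ` in `M` (w.r.t. `C`): putative but not a cause. -/
noncomputable def Preempted (C : CausalTheory U V D) (M : CausalModel U V D)
    (φ : BForm V D) (X : V) : Prop :=
  Putative C M φ X ∧ X ∉ C M φ

/-- A theory is similarity-based if it recognises at least all but-for causes and at
most all putative causes. -/
noncomputable def SimilarityBased (C : CausalTheory U V D) : Prop :=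
  ∀ M φ, ButFor M φ ⊆ C M φ ∧ ∀ X ∈ C M φ, Putative C M φ X

/-- The principle of presumption. -/
noncomputable def Presumption (C : CausalTheory U V D) : Prop :=
  ∀ M φ X, Preempted C M φ X →
    ∀ M' ∈ MSet M (C M φ), sol M' X = sol M X → X ∈ ButFor M' φ →
      ∃ W, W ∉ C M φ ∧ sol M W ≠ sol M' W

/-- Empirical causal theories (fixed-point characterisation). -/
noncomputable def Empirical (C : CausalTheory U V D) : Prop :=
  ∀ M φ X, X ∈ C M φ ↔
    ∃ M' ∈ MSet M (C M φ), sol M X = sol M' X ∧ X ∈ ButFor M' φ ∧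
      ∀ W, W ∉ C M φ → sol M W = sol M' W

/-- The relation `M₁ ⊑_{C,φ} M₂`. -/
noncomputable def CRel (C : CausalTheory U V D) (φ : BForm V D)
    (M₁ M₂ : CausalModel U V D) : Prop :=
  M₂ ∈ MSet M₁ (C M₁ φ) ∧ Sat M₂ φ ∧ ∀ X, X ∉ C M₁ φ → sol M₁ X = sol M₂ X

/-- The closure property. -/
noncomputable def Closure (C : CausalTheory U V D) : Prop :=
  ∀ (M : CausalModel U V D) (φ : BForm V D) M', CRel C φ M M' → C M' φ ⊆ C M φ

/-- AC1 and AC2 of Halpern's (2015) definition, for the set `Xs`: `M ⊨ φ` and there is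
an intervention assigning (range-permitted) values to all of `Xs` and holding any other
assigned variable fixed at its actual value, after which `¬φ` holds. -/
noncomputable def AC12 (M : CausalModel U V D) (φ : BForm V D) (Xs : Set V) : Prop :=
  Sat M φ ∧ ∃ g : PAssign M,
    (∀ X ∈ Xs, (g.1 X).isSome) ∧
    (∀ X, X ∉ Xs → ∀ d, g.1 X = some d → d = sol M X) ∧
    ¬ Sat (intervene M g) φ

/-- `Xs` is a complex cause of `φ` in `M`: AC1, AC2 and the minimality condition AC3. -/
noncomputable def ComplexCause (M : CausalModel U V D) (φ : BForm V D) (Xs : Set V) : Prop :=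
  AC12 M φ Xs ∧ ∀ Ys : Set V, Ys ⊂ Xs → ¬ AC12 M φ Ys

/-- The HP theory: `X ∈ HP(M,φ)` iff `X` belongs to some complex cause of `φ` in `M`. -/
noncomputable def HP : CausalTheory U V D := fun M φ =>
  {X | ∃ Xs : Set V, X ∈ Xs ∧ ComplexCause M φ Xs}

/-- Helper: a relation admitting a strictly monotone rank function is well-founded. -/
theorem wf_of_rank {α : Type} (r : α → α → Prop) (rk : α → ℕ)
    (h : ∀ a b, r a b → rk a < rk b) : WellFounded r :=
  Subrelation.wf (fun {a b} hr => h a b hr) (InvImage.wf rk Nat.lt_wfRel.wf)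



/-- The endogenous variables of the Jane–Julie models. -/
inductive JVar : Type
  | J1 | J2 | B
deriving DecidableEq

instance : Fintype JVar :=
  ⟨{JVar.J1, JVar.J2, JVar.B}, by intro x; cases x <;> simp⟩

open JVar

/-- The Jane–Julie model `M₂`: ranges `R(U₁) = R(J₁) = {0, 1/2}`,
`R(U₂) = R(J₂) = {0, 1/2, 1}`, `R(B) = {0, 1}`; equations `J₁ = U₁`, `J₂ = U₂`,
`B = 0` if `J₁ + J₂ ≥ 1` and `B = 1` otherwise; context `u = (1/2, 1)`. -/
noncomputable def M2 : CausalModel (Fin 2) JVar ℚ where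
  rangeU := fun i => if i = 0 then {0, 1/2} else {0, 1/2, 1}
  range := fun X => match X with
    | J1 => {0, 1/2}
    | J2 => {0, 1/2, 1}
    | B => {0, 1}
  rangeU_nonempty := by intro W; split <;> exact ⟨0, by simp⟩
  range_nonempty := by intro X; cases X <;> exact ⟨0, by simp⟩
  parent := fun Y X => (Y = J1 ∨ Y = J2) ∧ X = B
  acyclic := wf_of_rank _ (fun X => match X with | B => 1 | _ => 0)
    (by rintro a b ⟨h1, rfl⟩; rcases h1 with rfl | rfl <;> simp)
  F := fun X u v => match X with
    | J1 => u 0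
    | J2 => u 1
    | B => if 1 ≤ v J1 + v J2 then 0 else 1
  F_parents := by
    intro X u a b hab
    cases X with
    | J1 => rfl
    | J2 => rfl
    | B =>
      show (if 1 ≤ a J1 + a J2 then (0 : ℚ) else 1) = (if 1 ≤ b J1 + b J2 then (0 : ℚ) else 1)
      rw [hab J1 ⟨Or.inl rfl, rfl⟩, hab J2 ⟨Or.inr rfl, rfl⟩]
  F_range := by
    intro X u v hu hv
    cases X with
    | J1 => simpa using hu 0
    | J2 => simpa using hu 1
    | B =>
      show (if 1 ≤ v J1 + v J2 then (0 : ℚ) else 1) ∈ ({0, 1} : Finset ℚ)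
      split <;> simp
  ctx := fun i => if i = 0 then 1/2 else 1
  ctx_range := by intro W; fin_cases W <;> simp

/-- The basic formula `(B = 0)`. -/
noncomputable def φB : BForm JVar ℚ := .atom B 0

/-! Holding variables at their actual values never changes the solution, so `∅` never satisfies
AC2 and every but-for cause is by itself a complex cause; this gives `J₂` and `B`. For `J₁`:
once `J₂` is held at its actual value `1`, `J₁ + J₂ ≥ 1` whatever `J₁` is, so `{J₁}` fails AC2,
and by minimality a complex cause containing `J₁` cannot contain the but-for causes `J₂`, `B`. -/

omit [DecidableEq V] in
theorem sol_eq_F (M : CausalModel U V D) (X : V) : sol M X = M.F X M.ctx (sol M) := by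
  rw [sol, WellFounded.fix_eq]
  exact M.F_parents X M.ctx _ _ fun Y hY => dif_pos hY

omit [DecidableEq V] in
theorem sol_eq_of_forall_eq_F (M : CausalModel U V D) {v : V → D}
    (hv : ∀ X, v X = M.F X M.ctx v) : sol M = v := by
  funext X
  induction X using M.acyclic.induction with
  | _ X ih =>
    rw [sol_eq_F, hv X]
    exact M.F_parents X M.ctx _ _ ih

omit [DecidableEq V] in
theorem sol_intervene (M : CausalModel U V D) (g : PAssign M) (X : V) :
    sol (intervene M g) X = (g.1 X).getD (M.F X M.ctx (sol (intervene M g))) :=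
  sol_eq_F (intervene M g) X

omit [DecidableEq V] in
/-- The actual solution still solves the equations of the intervened model. -/
theorem sol_intervene_of_fixes_actual (M : CausalModel U V D) (g : PAssign M)
    (hg : ∀ X d, g.1 X = some d → d = sol M X) : sol (intervene M g) = sol M := by
  refine sol_eq_of_forall_eq_F (intervene M g) fun X => ?_
  change sol M X = (g.1 X).getD (M.F X M.ctx (sol M))
  cases h : g.1 X with
  | none => exact sol_eq_F M X
  | some d => exact (hg X d h).symm

omit [DecidableEq V] in
theorem not_AC12_empty (M : CausalModel U V D) (φ : BForm V D) : ¬ AC12 M φ ∅ := by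
  rintro ⟨hφ, g, -, hfix, hnot⟩
  refine hnot ?_
  rw [Sat, sol_intervene_of_fixes_actual M g fun X => hfix X (Set.notMem_empty X)]
  exact hφ

theorem AC12_singleton_of_mem_ButFor {M : CausalModel U V D} {φ : BForm V D} {X : V}
    (hX : X ∈ ButFor M φ) : AC12 M φ {X} := by
  obtain ⟨hφ, x, hx, hnot⟩ := hX
  refine ⟨hφ, single M X x hx, ?_, ?_, hnot⟩
  · rintro Y rfl
    simp [single]
  · intro Y hY d hd
    simp [single, Set.mem_singleton_iff.not.mp hY] at hd

theorem ComplexCause.eq_singleton_of_mem_ButFor {M : CausalModel U V D} {φ : BForm V D}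
    {Xs : Set V} {X : V} (hXs : ComplexCause M φ Xs) (hX : X ∈ Xs)
    (hbf : X ∈ ButFor M φ) : Xs = {X} := by
  rcases (Set.singleton_subset_iff.mpr hX).eq_or_ssubset with h | h
  · exact h.symm
  · exact absurd (AC12_singleton_of_mem_ButFor hbf) (hXs.2 _ h)

theorem ButFor_subset_HP (M : CausalModel U V D) (φ : BForm V D) : ButFor M φ ⊆ HP M φ :=
  fun X hX => ⟨{X}, rfl, AC12_singleton_of_mem_ButFor hX, fun _ hYs =>
    Set.ssubset_singleton_iff.mp hYs ▸ not_AC12_empty M φ⟩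

theorem sol_M2_J1 : sol M2 J1 = 1 / 2 := by
  rw [sol_eq_F]
  simp [M2]

theorem sol_M2_J2 : sol M2 J2 = 1 := by
  rw [sol_eq_F]
  simp [M2]

theorem sol_M2_B : sol M2 B = 0 := by
  rw [sol_eq_F]
  change (if 1 ≤ sol M2 J1 + sol M2 J2 then (0 : ℚ) else 1) = 0
  norm_num [sol_M2_J1, sol_M2_J2]

theorem sat_intervene_M2_of_fixes_J2_B (g : PAssign M2)
    (hJ2 : ∀ d, g.1 J2 = some d → d = sol M2 J2) (hB : ∀ d, g.1 B = some d → d = sol M2 B) :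
    Sat (intervene M2 g) φB := by
  have hJ1_nonneg : 0 ≤ sol (intervene M2 g) J1 := by
    rw [sol_intervene]
    cases h : g.1 J1 with
    | none => norm_num [M2]
    | some d =>
      have hd : d = 0 ∨ d = 1 / 2 := by simpa [M2] using g.2 J1 d h
      rcases hd with rfl | rfl <;> norm_num
  have hJ2_eq : sol (intervene M2 g) J2 = 1 := by
    rw [sol_intervene]
    cases h : g.1 J2 with
    | none => simp [M2]
    | some d => simpa [sol_M2_J2] using hJ2 d h
  change sol (intervene M2 g) B = 0
  rw [sol_intervene]
  cases h : g.1 B with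
  | none =>
    change (if 1 ≤ sol (intervene M2 g) J1 + sol (intervene M2 g) J2 then (0 : ℚ) else 1) = 0
    rw [if_pos (by linarith)]
  | some d => simpa [sol_M2_B] using hB d h

theorem not_AC12_M2_J1 : ¬ AC12 M2 φB {J1} := by
  rintro ⟨-, g, -, hfix, hnot⟩
  exact hnot (sat_intervene_M2_of_fixes_J2_B g (hfix J2 (by simp)) (hfix B (by simp)))

theorem sat_M2 : Sat M2 φB := sol_M2_B

theorem J2_mem_ButFor_M2 : J2 ∈ ButFor M2 φB := by
  refine ⟨sat_M2, 0, by simp [M2], ?_⟩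
  set M := intervene M2 (single M2 J2 0 _)
  have hJ1 : sol M J1 = 1 / 2 := by rw [sol_intervene]; simp [M2, single]
  have hJ2 : sol M J2 = 0 := by rw [sol_intervene]; simp [single]
  change ¬ sol M B = 0
  rw [sol_intervene]
  change ¬ (if 1 ≤ sol M J1 + sol M J2 then (0 : ℚ) else 1) = 0
  norm_num [hJ1, hJ2]

theorem B_mem_ButFor_M2 : B ∈ ButFor M2 φB := by
  refine ⟨sat_M2, 1, by simp [M2], ?_⟩
  change ¬ sol _ B = 0
  rw [sol_intervene]
  simp [single]

theorem J1_not_mem_HP_M2 : J1 ∉ HP M2 φB := by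
  rintro ⟨Xs, hJ1, hXs⟩
  have hsub : Xs ⊆ {J1} := by
    rintro (_ | _ | _) hX
    · rfl
    · simp [hXs.eq_singleton_of_mem_ButFor hX J2_mem_ButFor_M2] at hJ1
    · simp [hXs.eq_singleton_of_mem_ButFor hX B_mem_ButFor_M2] at hJ1
  exact not_AC12_M2_J1 (Set.Subset.antisymm hsub (Set.singleton_subset_iff.mpr hJ1) ▸ hXs.1)

/-- in the Jane–Julie model `M₂`, `ButFor(M₂,(B=0)) = {J₂, B}` and
`HP(M₂,(B=0)) = {J₂, B}`; in particular `J₁ ∉ HP(M₂,(B=0))`. -/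
theorem jane_julie_M2 :
    ButFor M2 φB = ({J2, B} : Set JVar) ∧
    HP M2 φB = ({J2, B} : Set JVar) ∧
    J1 ∉ HP M2 φB := by
  have hButFor : ButFor M2 φB = {J2, B} := by
    ext (_ | _ | _)
    · simpa using fun h => not_AC12_M2_J1 (AC12_singleton_of_mem_ButFor h)
    · simpa using J2_mem_ButFor_M2
    · simpa using B_mem_ButFor_M2
  refine ⟨hButFor, ?_, J1_not_mem_HP_M2⟩
  ext (_ | _ | _)
  · simpa using J1_not_mem_HP_M2
  · simpa using ButFor_subset_HP M2 φB J2_mem_ButFor_M2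
  · simpa using ButFor_subset_HP M2 φB B_mem_ButFor_M2

end HPFramework
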